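/- For the matrix F(0) of the car-with-two-trailers system, evaluated at x = 0 with positive parameters d₀, d₁, ℓ₁, ℓ₂ > 0, the determinant equals −(d₀+ℓ₁)(d₀+ℓ₂)(d₁+ℓ₂)/(ℓ₁⁴ℓ₂⁴); in particular det F(0) ≠ 0. -/
import Mathlib


open Matrix

/-- The matrix `F(0)` of the car-with-two-trailers system: the matrix
`(f₁, f₂, [f₁,f₂], [f₁,[f₁,f₂]], [f₁,[f₁,[f₁,f₂]]])` evaluated at `x = 0`,
with entries obtained from the paper's appendix formulas at `x = 0`
(where all sines vanish and all cosines equal 1). -/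
noncomputable def F0 (d0 d1 l1 l2 : ℝ) : Matrix (Fin 5) (Fin 5) ℝ :=
  !![1, 0, 0, 0, 0;
     0, 0, -1, 0, 0;
     0, 1, 0, 0, 0;
     0, -d0/l1, -(d0 + l1)/l1^2, -(l1 + d0)/l1^3, -(d0 + l1)/l1^4;
     0, d0*(d1 + l1)/(l1*l2) - d0/l2,
       ((d1 + l1)*(l1*d0 + l1*l2 + d0*l2) - l1*(d0*l1 + l1*l2))/(l1^2*l2^2),
       ((d1 + l1)*(d0*l1^2 + l1*l2*(l1 + d0) + d0*l2^2 + l1*l2^2)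
         - l1^2*(d0*l1 + l1*l2))/(l1^3*l2^3),
       (-d0*l1*(d1 + l1)^2*(d1 + l1 + l2)
         + d0*l1^2*(d1 + l1)*(l2 + d1 + l1)
         + (d1 + l1)*l1*(l1^2*l2 + d0*(2*l1^2 + 2*d1*l1 + l2^2 + d1^2)
             + d0*l2*(d1 + l1) + l2^3)
         + l1^2*(d1 + l1)*(2*d0*(d1 + l1) + d0*l2)
         + l1*(l1*l2*(d1 + l1)^2 + l1*l2^2*(d1 + l1)
             - l1*l2*(2*l1^2 + 2*d1*l1 + d1^2))
         - 2*l1^2*d0*(d1 + l1)^2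
         + (-l1^2*l2*d0 + l2^3*d0)*(d1 + l1)
         - l1^2*d0*(2*l1^2 + 2*d1*l1 + d1^2))/(l1^4*l2^4)]

theorem det_F0 (d0 d1 l1 l2 : ℝ) (hd0 : 0 < d0) (hd1 : 0 < d1)
    (hl1 : 0 < l1) (hl2 : 0 < l2) :
    (F0 d0 d1 l1 l2).det = -((d0 + l1)*(d0 + l2)*(d1 + l2))/(l1^4*l2^4) ∧
    (F0 d0 d1 l1 l2).det ≠ 0 := by
  have h1 : l1 ≠ 0 := hl1.ne'
  have h2 : l2 ≠ 0 := hl2.ne'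
  have hdet : (F0 d0 d1 l1 l2).det = -((d0 + l1)*(d0 + l2)*(d1 + l2))/(l1^4*l2^4) := by
    simp [F0, Matrix.det_succ_row_zero, Fin.sum_univ_succ, show ((1:Fin 4).succAbove 2) = 3 from rfl, show ((1:Fin 4).succAbove 0) = 0 from rfl, show ((1:Fin 4).succAbove 1) = 2 from rfl]
    field_simp
    ring
  refine ⟨hdet, ?_⟩
  rw [hdet]
  exact div_ne_zero (neg_ne_zero.mpr (by positivity)) (by positivity)
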